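/- Let n ≥ 2 and q ≥ 2 be integers, and let ℓ be an integer with 1 ≤ ℓ ≤ q−1. Let F be an alphabet of size q and let I ⊆ F with |I| = ℓ. Then the set C of all words c ∈ F^n whose first n−1 letters lie in I and whose last letter lies in F∖I is a non-overlapping code with |C| = ℓ^{n−1}·(q−ℓ); consequently C(n,q) ≥ ℓ^{n−1}·(q−ℓ). -/

import Mathlib

/-- Two words `u` and `v` of length `n` over alphabet `F` are overlapping if some
non-empty proper prefix of one equals a non-empty proper suffix of the other. -/
def Overlapping {F : Type*} {n : ℕ} (u v : Fin n → F) : Prop :=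
  ∃ m : ℕ, ∃ _h1 : 0 < m, ∃ h2 : m < n,
    ((∀ i : ℕ, ∀ hi : i < m, u ⟨i, hi.trans h2⟩ = v ⟨n - m + i, by omega⟩) ∨
     (∀ i : ℕ, ∀ hi : i < m, v ⟨i, hi.trans h2⟩ = u ⟨n - m + i, by omega⟩))

/-- A code `C ⊆ F^n` is non-overlapping if every two (not necessarily distinct)
codewords are non-overlapping. -/
def NonOverlappingCode {F : Type*} {n : ℕ} (C : Set (Fin n → F)) : Prop :=
  ∀ u ∈ C, ∀ v ∈ C, ¬ Overlapping u v

/-- `maxNOCode n q` is `C(n,q)`, the maximum cardinality of a non-overlapping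
`q`-ary code of length `n`. -/
noncomputable def maxNOCode (n q : ℕ) : ℕ :=
  sSup {m | ∃ C : Set (Fin n → Fin q), NonOverlappingCode C ∧ C.ncard = m}

section

variable {F : Type*} {n : ℕ}

theorem overlapping_comp_iff {G : Type*} {f : F → G} (hf : Function.Injective f)
    {u v : Fin n → F} : Overlapping (f ∘ u) (f ∘ v) ↔ Overlapping u v := by
  simp only [Overlapping, Function.comp_apply, hf.eq_iff]

theorem NonOverlappingCode.image {G : Type*} {f : F → G} (hf : Function.Injective f)
    {C : Set (Fin n → F)} (hC : NonOverlappingCode C) :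
    NonOverlappingCode ((f ∘ ·) '' C) := by
  rintro _ ⟨u, hu, rfl⟩ _ ⟨v, hv, rfl⟩
  rw [overlapping_comp_iff hf]
  exact hC u hu v hv

theorem NonOverlappingCode.ncard_le_maxNOCode [Finite F] {q : ℕ} (hF : Nat.card F = q)
    {C : Set (Fin n → F)} (hC : NonOverlappingCode C) : C.ncard ≤ maxNOCode n q := by
  obtain ⟨e⟩ : Nonempty (F ≃ Fin q) := Finite.card_eq.mp (by simpa using hF)
  have hinj : Function.Injective (e ∘ · : (Fin n → F) → Fin n → Fin q) :=
    fun u v huv => funext fun i => e.injective (congrFun huv i)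
  have hbdd : BddAbove {m | ∃ C : Set (Fin n → Fin q), NonOverlappingCode C ∧ C.ncard = m} :=
    ⟨Nat.card (Fin n → Fin q), by rintro _ ⟨C, -, rfl⟩; exact Set.ncard_le_card C⟩
  rw [← Set.ncard_image_of_injective C hinj]
  exact le_csSup hbdd ⟨_, hC.image e.injective, rfl⟩

/-- Construction 2 of Blackburn for `k = n - 1` and `S = I^{n-1}`, with the last letter taken
in `J` rather than `F ∖ I`. -/
def initLastCode (I J : Set F) (h : n - 1 < n) : Set (Fin n → F) :=
  {c | (∀ i : Fin n, (i : ℕ) < n - 1 → c i ∈ I) ∧ c ⟨n - 1, h⟩ ∈ J}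

theorem nonOverlappingCode_initLastCode {I J : Set F} (hIJ : Disjoint I J) (h : n - 1 < n) :
    NonOverlappingCode (initLastCode I J h) := by
  -- the last letter of a proper prefix of `u` lies in `I`, the last letter of `v` in `J`
  have prefix_ne_suffix : ∀ u ∈ initLastCode I J h, ∀ v ∈ initLastCode I J h,
      ∀ m (hm0 : 0 < m) (hmn : m < n),
        ¬ ∀ i (hi : i < m), u ⟨i, hi.trans hmn⟩ = v ⟨n - m + i, by omega⟩ := by
    rintro u ⟨hu, -⟩ v ⟨-, hv⟩ m hm0 hmn hpre
    have hlast := hpre (m - 1) (by omega)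
    have hpos : (⟨n - m + (m - 1), by omega⟩ : Fin n) = ⟨n - 1, h⟩ :=
      Fin.ext (show n - m + (m - 1) = n - 1 by omega)
    rw [hpos] at hlast
    exact hIJ.ne_of_mem (hu ⟨m - 1, by omega⟩ (show m - 1 < n - 1 by omega)) hv hlast
  rintro u hu v hv ⟨m, hm0, hmn, hpre | hpre⟩
  exacts [prefix_ne_suffix u hu v hv m hm0 hmn hpre, prefix_ne_suffix v hv u hu m hm0 hmn hpre]

theorem ncard_initLastCode [Finite F] (I J : Set F) (h : n - 1 < n) :
    (initLastCode I J h).ncard = I.ncard ^ (n - 1) * J.ncard := by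
  obtain ⟨k, rfl⟩ : ∃ k, n = k + 1 := ⟨n - 1, by omega⟩
  have hpi : initLastCode I J h =
      Set.univ.pi fun i : Fin (k + 1) => if (i : ℕ) < k then I else J := by
    ext c
    simp only [initLastCode, Set.mem_ofPred_eq, Set.mem_univ_pi, Fin.forall_fin_succ',
      Fin.val_castSucc, Fin.is_lt, if_true, Fin.val_last, lt_irrefl, if_false, Nat.add_sub_cancel,
      true_implies, false_implies, and_true]
    rfl
  rw [hpi, ← Nat.card_coe_set_eq, Nat.card_congr (Equiv.Set.univPi _), Nat.card_pi,
    Fin.prod_univ_castSucc]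
  simp [Nat.card_coe_set_eq]

end

/-- The special case `k = n - 1`, `S = I^{n-1}` of Construction 2 of Blackburn,
"Non-overlapping codes": the set of words whose first `n-1` letters lie in `I` and whose
last letter lies outside `I` is a non-overlapping code of size `ℓ^{n-1}(q - ℓ)`;
consequently `C(n,q) ≥ ℓ^{n-1}(q - ℓ)`. -/
theorem stmt9 {F : Type*} [Fintype F] {n q ℓ : ℕ} (hn : 2 ≤ n)
    (hF : Fintype.card F = q)
    (I : Set F) (hI : I.ncard = ℓ) :
    NonOverlappingCode {c : Fin n → F |
        (∀ i : Fin n, (i : ℕ) < n - 1 → c i ∈ I) ∧ c ⟨n - 1, by omega⟩ ∉ I} ∧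
    {c : Fin n → F |
        (∀ i : Fin n, (i : ℕ) < n - 1 → c i ∈ I) ∧ c ⟨n - 1, by omega⟩ ∉ I}.ncard
      = ℓ ^ (n - 1) * (q - ℓ) ∧
    ℓ ^ (n - 1) * (q - ℓ) ≤ maxNOCode n q := by
  have hcompl : Iᶜ.ncard = q - ℓ := by
    rw [Set.ncard_compl, Nat.card_eq_fintype_card, hF, hI]
  have hcode := nonOverlappingCode_initLastCode (J := Iᶜ) disjoint_compl_right (n := n) (by omega)
  have hcard : (initLastCode I Iᶜ (n := n) (by omega)).ncard = ℓ ^ (n - 1) * (q - ℓ) := by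
    rw [ncard_initLastCode, hI, hcompl]
  exact ⟨hcode, hcard, hcard ▸ hcode.ncard_le_maxNOCode (by rwa [Nat.card_eq_fintype_card])⟩
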